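/- arXiv:1503.07811 — 2 statements merged into one kernel-verified Lean document; each statement's English description precedes it below -/
import Mathlib

section
/- Let a ∈ ℂ with Re(a) ≥ 0 and Im(a) > 0, h > 0, and set α = 2a + (h²/3)a² and β = 2Re(a) + (h²/3)|a|². Then α ≠ 0 and μ := β/|α| satisfies −1 < μ < 1. -/
/-! With `c = h²/3`, `α = 2a + c a²` and `β = 2 Re a + c |a|²` satisfy `|α|² = β² + 4 (Im a)²`
for every real `c`. Hence `Im a ≠ 0` gives `|β| < |α|`, which is `α ≠ 0` and `|β / |α|| < 1`. -/

theorem Complex.norm_two_mul_add_ofReal_mul_sq_sq (a : ℂ) (c : ℝ) :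
    ‖2 * a + (c : ℂ) * a ^ 2‖ ^ 2 = (2 * a.re + c * ‖a‖ ^ 2) ^ 2 + 4 * a.im ^ 2 := by
  rw [Complex.sq_norm, Complex.sq_norm, Complex.normSq_apply, Complex.normSq_apply]
  simp only [Complex.add_re, Complex.add_im, Complex.mul_re, Complex.mul_im, pow_two,
    Complex.ofReal_re, Complex.ofReal_im, Complex.re_ofNat, Complex.im_ofNat]
  ring

theorem abs_div_lt_one_of_sq_eq_sq_add {x y d : ℝ} (hy : 0 ≤ y) (hd : 0 < d)
    (hxy : y ^ 2 = x ^ 2 + d) : 0 < y ∧ |x / y| < 1 := by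
  have hlt : |x| < y := abs_lt_of_sq_lt_sq (by linarith) hy
  have hpos : 0 < y := (abs_nonneg x).trans_lt hlt
  exact ⟨hpos, by rwa [abs_div, abs_of_pos hpos, div_lt_one hpos]⟩

theorem stmt_10_general (a : ℂ) (ha_im : 0 < a.im) (h : ℝ) :
    (2 * a + (h ^ 2 / 3 : ℂ) * a ^ 2) ≠ 0 ∧
      -1 < (2 * a.re + h ^ 2 / 3 * ‖a‖ ^ 2)
              / ‖2 * a + (h ^ 2 / 3 : ℂ) * a ^ 2‖ ∧
        (2 * a.re + h ^ 2 / 3 * ‖a‖ ^ 2)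
              / ‖2 * a + (h ^ 2 / 3 : ℂ) * a ^ 2‖ < 1 := by
  have hnorm := Complex.norm_two_mul_add_ofReal_mul_sq_sq a (h ^ 2 / 3)
  push_cast at hnorm
  obtain ⟨hpos, hμ⟩ := abs_div_lt_one_of_sq_eq_sq_add (norm_nonneg _) (by positivity) hnorm
  exact ⟨norm_pos_iff.mp hpos, abs_lt.mp hμ⟩

/-- For a with Re a ≥ 0, Im a > 0 and h > 0, α = 2a + (h²/3)a² ≠ 0 and
μ = β/|α| with β = 2Re a + (h²/3)|a|² satisfies −1 < μ < 1. -/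
theorem stmt_10 (a : ℂ) (ha_re : 0 ≤ a.re) (ha_im : 0 < a.im) (h : ℝ) (hh : 0 < h) :
    (2 * a + (h ^ 2 / 3 : ℂ) * a ^ 2) ≠ 0 ∧
      -1 < (2 * a.re + h ^ 2 / 3 * ‖a‖ ^ 2)
              / ‖2 * a + (h ^ 2 / 3 : ℂ) * a ^ 2‖ ∧
        (2 * a.re + h ^ 2 / 3 * ‖a‖ ^ 2)
              / ‖2 * a + (h ^ 2 / 3 : ℂ) * a ^ 2‖ < 1 :=
  stmt_10_general a ha_im h
end

section
/- Let H be a complex Hilbert space, A a bounded self-adjoint operator with A ≥ δ̂ I for some δ̂ > 0, and consider the Crank–Nicolson scheme iħ ∂̄_t Ψ^m = A s̄_t Ψ^m + F^m on a uniform mesh with step τ, where ∂̄_t Ψ^m = (Ψ^m − Ψ^{m−1})/τ and s̄_t Ψ^m = (Ψ^m + Ψ^{m−1})/2. Then in the energy norm ‖w‖_E = ⟨Aw,w⟩^{1/2}: max_{0≤m≤M} ‖Ψ^m‖_E ≤ ‖Ψ^0‖_E + 4 Σ_{m=1}^M ‖∂̄_t F^m‖_{E*} τ + 4‖F^0‖_{E*},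 where ‖w‖_{E*} = sup{|⟨w,φ⟩| : ‖φ‖_E = 1} and F^0 ∈ H is arbitrary. -/
/-!
Pairing the `m`-th equation of the scheme with `Ψ^m - Ψ^{m-1}` and taking real parts kills the
skew-adjoint term `iħ/τ ‖Ψ^m - Ψ^{m-1}‖²`, while symmetry of `A` turns `⟨Ψ^m - Ψ^{m-1}, A s̄_t Ψ^m⟩`
into half the energy increment. Telescoping gives
`‖Ψ^n‖_E² = ‖Ψ^0‖_E² - 2 Re Σ_m ⟨F^m, Ψ^m - Ψ^{m-1}⟩`, and summation by parts moves the
difference onto `F`. Every pairing is then at most `‖·‖_{E*} Y`, where `Y` is the largest energy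
norm `‖Ψ^k‖_E`, with `F^n` controlled by `F^0` and its increments; at a maximiser this reads
`Y² ≤ (‖Ψ^0‖_E + 4 Σ_m ‖∂̄_t F^m‖_{E*} τ + 4 ‖F^0‖_{E*}) Y`.
-/

open Finset
open scoped InnerProductSpace

theorem Finset.sum_Icc_one_sub_pred {G : Type*} [AddCommGroup G] (f : ℕ → G) (n : ℕ) :
    ∑ m ∈ Icc 1 n, (f m - f (m - 1)) = f n - f 0 := by
  induction n with
  | zero => simp
  | succ n ih => rw [sum_Icc_succ_top (by omega), ih, Nat.add_sub_cancel]; abel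

section SummationByParts

variable {𝕜 E : Type*} [RCLike 𝕜] [NormedAddCommGroup E] [InnerProductSpace 𝕜 E]

theorem sum_Icc_inner_sub_pred (F Ψ : ℕ → E) (n : ℕ) :
    ∑ m ∈ Icc 1 n, ⟪F m, Ψ m - Ψ (m - 1)⟫_𝕜
      = ⟪F n, Ψ n⟫_𝕜 - ⟪F 0, Ψ 0⟫_𝕜 - ∑ m ∈ Icc 1 n, ⟪F m - F (m - 1), Ψ (m - 1)⟫_𝕜 := by
  rw [eq_sub_iff_add_eq, ← sum_add_distrib,
    ← sum_Icc_one_sub_pred (fun m => ⟪F m, Ψ m⟫_𝕜)]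
  refine sum_congr rfl fun m _ => ?_
  rw [inner_sub_left, inner_sub_right]
  ring

theorem norm_inner_le_norm_inner_zero_add_sum (F : ℕ → E) (n : ℕ) (φ : E) :
    ‖⟪F n, φ⟫_𝕜‖ ≤ ‖⟪F 0, φ⟫_𝕜‖ + ∑ m ∈ Icc 1 n, ‖⟪F m - F (m - 1), φ⟫_𝕜‖ := by
  rw [← sub_add_cancel (F n) (F 0), ← sum_Icc_one_sub_pred, inner_add_left, sum_inner]
  exact (norm_add_le _ _).trans (by rw [add_comm]; gcongr; exact norm_sum_le _ _)

end SummationByParts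

theorem le_of_sq_le_mul_upperBound {e : ℕ → ℝ} {R : ℝ} {M : ℕ} (hR : 0 ≤ R)
    (h : ∀ Y, (∀ k ≤ M, e k ≤ Y) → ∀ n ≤ M, e n ^ 2 ≤ R * Y) : ∀ m ≤ M, e m ≤ R := by
  have hne : (range (M + 1)).Nonempty := nonempty_range_add_one
  set Y := (range (M + 1)).sup' hne e
  have hY : ∀ k ≤ M, e k ≤ Y := fun k hk => le_sup' e (mem_range.mpr (by omega))
  obtain ⟨n₀, hn₀, hY_eq⟩ := exists_mem_eq_sup' hne e
  have hYR : Y ≤ R := by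
    have := h Y hY n₀ (by simpa [Nat.lt_succ_iff] using hn₀)
    rw [← hY_eq] at this
    nlinarith
  exact fun m hm => (hY m hm).trans hYR

namespace CrankNicolson

variable {H : Type*} [NormedAddCommGroup H] [InnerProductSpace ℂ H]

noncomputable def energyNorm (A : H →L[ℂ] H) (w : H) : ℝ :=
  Real.sqrt ((⟪A w, w⟫_ℂ).re)

noncomputable def dualEnergyNorm (A : H →L[ℂ] H) (w : H) : ℝ :=
  sSup {r : ℝ | ∃ φ : H, energyNorm A φ = 1 ∧ r = ‖⟪w, φ⟫_ℂ‖}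

variable {A : H →L[ℂ] H}

theorem re_inner_comm (x y : H) : (⟪x, y⟫_ℂ).re = (⟪y, x⟫_ℂ).re := by
  rw [← inner_conj_symm, Complex.conj_re]

theorem energyNorm_nonneg (w : H) : 0 ≤ energyNorm A w := Real.sqrt_nonneg _

theorem energyNorm_sq (hA : ∀ x, 0 ≤ (⟪A x, x⟫_ℂ).re) (w : H) :
    energyNorm A w ^ 2 = (⟪A w, w⟫_ℂ).re :=
  Real.sq_sqrt (hA w)

theorem energyNorm_ofReal_smul (r : ℝ) (w : H) :
    energyNorm A ((r : ℂ) • w) = |r| * energyNorm A w := by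
  have : (⟪A ((r : ℂ) • w), (r : ℂ) • w⟫_ℂ).re = r ^ 2 * (⟪A w, w⟫_ℂ).re := by
    rw [map_smul, inner_smul_left, inner_smul_right, Complex.conj_ofReal, ← mul_assoc,
      ← Complex.ofReal_mul, Complex.re_ofReal_mul, sq]
  rw [energyNorm, energyNorm, this, Real.sqrt_mul (sq_nonneg r), Real.sqrt_sq_eq_abs]

theorem sqrt_mul_norm_le_energyNorm {δ : ℝ} (hcoerc : ∀ x, δ * ‖x‖ ^ 2 ≤ (⟪A x, x⟫_ℂ).re)
    (hδ : 0 ≤ δ) (x : H) : Real.sqrt δ * ‖x‖ ≤ energyNorm A x := by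
  rw [← Real.sqrt_sq (norm_nonneg x), ← Real.sqrt_mul hδ]
  exact Real.sqrt_le_sqrt (hcoerc x)

theorem dualEnergyNorm_nonneg (w : H) : 0 ≤ dualEnergyNorm A w :=
  Real.sSup_nonneg (by rintro _ ⟨φ, -, rfl⟩; exact norm_nonneg _)

theorem bddAbove_dualEnergyNorm_set {δ : ℝ} (hcoerc : ∀ x, δ * ‖x‖ ^ 2 ≤ (⟪A x, x⟫_ℂ).re)
    (hδ : 0 < δ) (w : H) :
    BddAbove {r : ℝ | ∃ φ : H, energyNorm A φ = 1 ∧ r = ‖⟪w, φ⟫_ℂ‖} := by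
  refine ⟨‖w‖ / Real.sqrt δ, ?_⟩
  rintro _ ⟨φ, hφ, rfl⟩
  have hφ_le : ‖φ‖ ≤ 1 / Real.sqrt δ := by
    rw [le_div_iff₀' (Real.sqrt_pos.mpr hδ), ← hφ]
    exact sqrt_mul_norm_le_energyNorm hcoerc hδ.le φ
  calc ‖⟪w, φ⟫_ℂ‖ ≤ ‖w‖ * ‖φ‖ := norm_inner_le_norm w φ
    _ ≤ ‖w‖ * (1 / Real.sqrt δ) := by gcongr
    _ = ‖w‖ / Real.sqrt δ := by ring

theorem norm_inner_le_dualEnergyNorm_mul_energyNorm {δ : ℝ}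
    (hcoerc : ∀ x, δ * ‖x‖ ^ 2 ≤ (⟪A x, x⟫_ℂ).re) (hδ : 0 < δ) (w φ : H) :
    ‖⟪w, φ⟫_ℂ‖ ≤ dualEnergyNorm A w * energyNorm A φ := by
  set c := energyNorm A φ
  rcases (energyNorm_nonneg φ).eq_or_lt with hc | hc
  · have : ‖φ‖ = 0 := by
      have := sqrt_mul_norm_le_energyNorm hcoerc hδ.le φ
      have := Real.sqrt_pos.mpr hδ
      nlinarith [norm_nonneg φ]
    rw [norm_eq_zero.mp this, inner_zero_right, norm_zero]
    exact mul_nonneg (dualEnergyNorm_nonneg w) (energyNorm_nonneg _)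
  · have hunit : energyNorm A ((c⁻¹ : ℝ) • φ : H) = 1 := by
      rw [← Complex.coe_smul, energyNorm_ofReal_smul, abs_of_pos (inv_pos.mpr hc),
        inv_mul_cancel₀ hc.ne']
    have hle : c⁻¹ * ‖⟪w, φ⟫_ℂ‖ ≤ dualEnergyNorm A w := by
      refine le_csSup (bddAbove_dualEnergyNorm_set hcoerc hδ w) ⟨_, hunit, ?_⟩
      rw [← Complex.coe_smul, inner_smul_right, norm_mul, Complex.norm_real,
        Real.norm_of_nonneg (inv_nonneg.mpr hc.le)]
    rwa [inv_mul_le_iff₀ hc, mul_comm] at hle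

theorem norm_inner_le_dualEnergyNorm_inv_smul {δ : ℝ}
    (hcoerc : ∀ x, δ * ‖x‖ ^ 2 ≤ (⟪A x, x⟫_ℂ).re) (hδ : 0 < δ) {τ : ℝ} (hτ : 0 < τ) (v φ : H) :
    ‖⟪v, φ⟫_ℂ‖ ≤ dualEnergyNorm A ((τ⁻¹ : ℂ) • v) * τ * energyNorm A φ := by
  have hv : v = (τ : ℂ) • (τ⁻¹ : ℂ) • v := by
    rw [smul_smul, mul_inv_cancel₀ (Complex.ofReal_ne_zero.mpr hτ.ne'), one_smul]
  calc ‖⟪v, φ⟫_ℂ‖ = τ * ‖⟪(τ⁻¹ : ℂ) • v, φ⟫_ℂ‖ := by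
        conv_lhs => rw [hv]
        rw [inner_smul_left, norm_mul, Complex.norm_conj, Complex.norm_real,
          Real.norm_of_nonneg hτ.le]
    _ ≤ τ * (dualEnergyNorm A ((τ⁻¹ : ℂ) • v) * energyNorm A φ) := by
        gcongr; exact norm_inner_le_dualEnergyNorm_mul_energyNorm hcoerc hδ _ _
    _ = _ := by ring

theorem re_inner_sub_apply_add (hA : (A : H →ₗ[ℂ] H).IsSymmetric) (u v : H) :
    (⟪u - v, A (u + v)⟫_ℂ).re = (⟪A u, u⟫_ℂ).re - (⟪A v, v⟫_ℂ).re := by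
  have hcross : (⟪u, A v⟫_ℂ).re = (⟪v, A u⟫_ℂ).re := by
    rw [← hA.apply_clm, re_inner_comm]
  rw [map_add, inner_sub_left, inner_add_right, inner_add_right, Complex.sub_re, Complex.add_re,
    Complex.add_re, hcross, re_inner_comm u (A u), re_inner_comm v (A v)]
  ring

/-- Pair the step with `u - v`: the left side `c ‖u - v‖²` has zero real part. -/
theorem re_inner_apply_self_eq_of_step (hA : (A : H →ₗ[ℂ] H).IsSymmetric) {c : ℂ}
    (hc : c.re = 0) {u v f : H} (h : c • (u - v) = A ((1 / 2 : ℂ) • (u + v)) + f) :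
    (⟪A u, u⟫_ℂ).re = (⟪A v, v⟫_ℂ).re - 2 * (⟪f, u - v⟫_ℂ).re := by
  have h' := congrArg (fun x => (⟪u - v, x⟫_ℂ).re) h
  simp only [inner_smul_right, inner_self_eq_norm_sq_to_K, inner_add_right, map_smul,
    Complex.add_re] at h'
  rw [show (c * _).re = 0 by simp [hc, sq],
    show (1 / 2 : ℂ) = ((1 / 2 : ℝ) : ℂ) by norm_num, Complex.re_ofReal_mul,
    re_inner_sub_apply_add hA, re_inner_comm (u - v) f] at h'
  linarith

/-- The scheme `c (Ψ^m - Ψ^{m-1}) = A s̄_t Ψ^m + F^m`, with `c = iħ/τ` in the application. -/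
def IsScheme (A : H →L[ℂ] H) (c : ℂ) (M : ℕ) (Ψ F : ℕ → H) : Prop :=
  ∀ m, 1 ≤ m → m ≤ M →
    c • (Ψ m - Ψ (m - 1)) = A ((1 / 2 : ℂ) • (Ψ m + Ψ (m - 1))) + F m

variable {c : ℂ} {M : ℕ} {Ψ F : ℕ → H}

theorem IsScheme.re_inner_apply_self_eq (hs : IsScheme A c M Ψ F)
    (hA : (A : H →ₗ[ℂ] H).IsSymmetric) (hc : c.re = 0) {n : ℕ} (hn : n ≤ M) :
    (⟪A (Ψ n), Ψ n⟫_ℂ).re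
      = (⟪A (Ψ 0), Ψ 0⟫_ℂ).re - 2 * ∑ m ∈ Icc 1 n, (⟪F m, Ψ m - Ψ (m - 1)⟫_ℂ).re := by
  have hsteps : ∑ m ∈ Icc 1 n, ((⟪A (Ψ m), Ψ m⟫_ℂ).re - (⟪A (Ψ (m - 1)), Ψ (m - 1)⟫_ℂ).re)
      = ∑ m ∈ Icc 1 n, -(2 * (⟪F m, Ψ m - Ψ (m - 1)⟫_ℂ).re) := by
    refine sum_congr rfl fun m hm => ?_
    obtain ⟨hm1, hmn⟩ := mem_Icc.mp hm
    rw [re_inner_apply_self_eq_of_step hA hc (hs m hm1 (hmn.trans hn))]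
    ring
  rw [sum_Icc_one_sub_pred (fun m => (⟪A (Ψ m), Ψ m⟫_ℂ).re), sum_neg_distrib, ← mul_sum] at hsteps
  linarith

theorem IsScheme.energyNorm_sq_eq (hs : IsScheme A c M Ψ F)
    (hA : (A : H →ₗ[ℂ] H).IsSymmetric) (hc : c.re = 0) (hpos : ∀ x, 0 ≤ (⟪A x, x⟫_ℂ).re)
    {n : ℕ} (hn : n ≤ M) :
    energyNorm A (Ψ n) ^ 2 = energyNorm A (Ψ 0) ^ 2 - 2 * (⟪F n, Ψ n⟫_ℂ).re
      + 2 * (⟪F 0, Ψ 0⟫_ℂ).re + 2 * ∑ m ∈ Icc 1 n, (⟪F m - F (m - 1), Ψ (m - 1)⟫_ℂ).re := by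
  rw [energyNorm_sq hpos, energyNorm_sq hpos, hs.re_inner_apply_self_eq hA hc hn,
    ← Complex.re_sum, sum_Icc_inner_sub_pred, Complex.sub_re, Complex.sub_re, Complex.re_sum]
  ring

theorem IsScheme.energyNorm_sq_le (hs : IsScheme A c M Ψ F)
    (hA : (A : H →ₗ[ℂ] H).IsSymmetric) (hc : c.re = 0) {δ : ℝ}
    (hcoerc : ∀ x, δ * ‖x‖ ^ 2 ≤ (⟪A x, x⟫_ℂ).re) (hδ : 0 < δ) {τ : ℝ} (hτ : 0 < τ) {Y : ℝ}
    (hY : ∀ k ≤ M, energyNorm A (Ψ k) ≤ Y) {n : ℕ} (hn : n ≤ M) :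
    energyNorm A (Ψ n) ^ 2
      ≤ (energyNorm A (Ψ 0)
          + 4 * ∑ k ∈ Icc 1 M, dualEnergyNorm A ((τ⁻¹ : ℂ) • (F k - F (k - 1))) * τ
          + 4 * dualEnergyNorm A (F 0)) * Y := by
  set g : ℕ → ℝ := fun k => dualEnergyNorm A ((τ⁻¹ : ℂ) • (F k - F (k - 1))) * τ
  set G₀ := dualEnergyNorm A (F 0)
  set S := ∑ k ∈ Icc 1 M, g k
  have hpos (x : H) : 0 ≤ (⟪A x, x⟫_ℂ).re :=
    (mul_nonneg hδ.le (sq_nonneg _)).trans (hcoerc x)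
  have hY₀ : 0 ≤ Y := (energyNorm_nonneg _).trans (hY 0 M.zero_le)
  have hg : ∀ k, 0 ≤ g k := fun k => mul_nonneg (dualEnergyNorm_nonneg _) hτ.le
  have hgS : ∑ m ∈ Icc 1 n, g m ≤ S :=
    sum_le_sum_of_subset_of_nonneg (Icc_subset_Icc_right hn) fun k _ _ => hg k
  have hdual := norm_inner_le_dualEnergyNorm_mul_energyNorm hcoerc hδ
  have hdF : ∀ m φ, ‖⟪F m - F (m - 1), φ⟫_ℂ‖ ≤ g m * energyNorm A φ :=
    fun m => norm_inner_le_dualEnergyNorm_inv_smul hcoerc hδ hτ _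
  have hid := hs.energyNorm_sq_eq hA hc hpos hn
  have hΨ₀ : energyNorm A (Ψ 0) ^ 2 ≤ energyNorm A (Ψ 0) * Y := by
    rw [sq]; exact mul_le_mul_of_nonneg_left (hY 0 M.zero_le) (energyNorm_nonneg _)
  have hFn : -(⟪F n, Ψ n⟫_ℂ).re ≤ (G₀ + S) * Y :=
    calc -(⟪F n, Ψ n⟫_ℂ).re ≤ ‖⟪F n, Ψ n⟫_ℂ‖ := (neg_le_abs _).trans (Complex.abs_re_le_norm _)
      _ ≤ ‖⟪F 0, Ψ n⟫_ℂ‖ + ∑ m ∈ Icc 1 n, ‖⟪F m - F (m - 1), Ψ n⟫_ℂ‖ :=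
        norm_inner_le_norm_inner_zero_add_sum F n _
      _ ≤ G₀ * energyNorm A (Ψ n) + ∑ m ∈ Icc 1 n, g m * energyNorm A (Ψ n) :=
        add_le_add (hdual _ _) (sum_le_sum fun m _ => hdF m _)
      _ ≤ (G₀ + S) * Y := by
        rw [← sum_mul, ← add_mul]
        exact mul_le_mul (by linarith) (hY n hn) (energyNorm_nonneg _)
          (add_nonneg (dualEnergyNorm_nonneg _) ((sum_nonneg fun k _ => hg k).trans hgS))
  have hF₀ : (⟪F 0, Ψ 0⟫_ℂ).re ≤ G₀ * Y :=
    (Complex.re_le_norm _).trans <| (hdual _ _).trans <|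
      mul_le_mul_of_nonneg_left (hY 0 M.zero_le) (dualEnergyNorm_nonneg _)
  have hdiff : ∑ m ∈ Icc 1 n, (⟪F m - F (m - 1), Ψ (m - 1)⟫_ℂ).re ≤ S * Y :=
    calc ∑ m ∈ Icc 1 n, (⟪F m - F (m - 1), Ψ (m - 1)⟫_ℂ).re ≤ ∑ m ∈ Icc 1 n, g m * Y := by
          refine sum_le_sum fun m hm => (Complex.re_le_norm _).trans <| (hdF m _).trans ?_
          exact mul_le_mul_of_nonneg_left (hY _ (by grind)) (hg m)
      _ ≤ S * Y := by rw [← sum_mul]; exact mul_le_mul_of_nonneg_right hgS hY₀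
  linarith

end CrankNicolson

open CrankNicolson

theorem stmt_19_general {H : Type*} [NormedAddCommGroup H] [InnerProductSpace ℂ H] [CompleteSpace H]
    (A : H →L[ℂ] H) (hA : IsSelfAdjoint A)
    (δhat : ℝ) (hδ : 0 < δhat) (hcoerc : ∀ x : H, δhat * ‖x‖ ^ 2 ≤ (⟪A x, x⟫_ℂ).re)
    (hbar τ : ℝ) (hτ : 0 < τ) (M : ℕ) (Ψ F : ℕ → H)
    (scheme : ∀ m, 1 ≤ m → m ≤ M →
      ((Complex.I * hbar / τ) : ℂ) • (Ψ m - Ψ (m - 1))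
        = A ((1 / 2 : ℂ) • (Ψ m + Ψ (m - 1))) + F m)
    (normE : H → ℝ) (hnormE : ∀ w, normE w = Real.sqrt ((⟪A w, w⟫_ℂ).re))
    (normEstar : H → ℝ)
    (hnormEstar : ∀ w,
      normEstar w = sSup {r : ℝ | ∃ φ : H, normE φ = 1 ∧ r = ‖⟪w, φ⟫_ℂ‖}) :
    ∀ m ≤ M,
      normE (Ψ m)
        ≤ normE (Ψ 0)
          + 4 * ∑ k ∈ Finset.Icc 1 M, normEstar ((τ⁻¹ : ℂ) • (F k - F (k - 1))) * τ
          + 4 * normEstar (F 0) := by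
  obtain rfl : normE = energyNorm A := funext hnormE
  obtain rfl : normEstar = dualEnergyNorm A := funext hnormEstar
  have hc : (Complex.I * hbar / τ : ℂ).re = 0 := by simp [Complex.div_re]
  have hR : 0 ≤ energyNorm A (Ψ 0)
      + 4 * ∑ k ∈ Icc 1 M, dualEnergyNorm A ((τ⁻¹ : ℂ) • (F k - F (k - 1))) * τ
      + 4 * dualEnergyNorm A (F 0) := by
    have := sum_nonneg fun k (_ : k ∈ Icc 1 M) =>
      mul_nonneg (dualEnergyNorm_nonneg (A := A) ((τ⁻¹ : ℂ) • (F k - F (k - 1)))) hτ.le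
    linarith [energyNorm_nonneg (A := A) (Ψ 0), dualEnergyNorm_nonneg (A := A) (F 0)]
  exact le_of_sq_le_mul_upperBound hR fun Y hY n hn =>
    IsScheme.energyNorm_sq_le scheme hA.isSymmetric hc hcoerc hδ hτ hY hn

/-- Second (energy) stability bound for the Crank–Nicolson scheme
iħ ∂̄_t Ψ^m = A s̄_t Ψ^m + F^m with bounded self-adjoint coercive A:
max_m ‖Ψ^m‖_E ≤ ‖Ψ^0‖_E + 4 Σ ‖∂̄_t F^m‖_{E*} τ + 4 ‖F^0‖_{E*}. -/
theorem stmt_19 {H : Type*} [NormedAddCommGroup H] [InnerProductSpace ℂ H] [CompleteSpace H]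
    (A : H →L[ℂ] H) (hA : IsSelfAdjoint A)
    (δhat : ℝ) (hδ : 0 < δhat) (hcoerc : ∀ x : H, δhat * ‖x‖ ^ 2 ≤ (⟪A x, x⟫_ℂ).re)
    (hbar τ : ℝ) (hhbar : 0 < hbar) (hτ : 0 < τ) (M : ℕ) (Ψ F : ℕ → H)
    (scheme : ∀ m, 1 ≤ m → m ≤ M →
      ((Complex.I * hbar / τ) : ℂ) • (Ψ m - Ψ (m - 1))
        = A ((1 / 2 : ℂ) • (Ψ m + Ψ (m - 1))) + F m)
    (normE : H → ℝ) (hnormE : ∀ w, normE w = Real.sqrt ((⟪A w, w⟫_ℂ).re))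
    (normEstar : H → ℝ)
    (hnormEstar : ∀ w,
      normEstar w = sSup {r : ℝ | ∃ φ : H, normE φ = 1 ∧ r = ‖⟪w, φ⟫_ℂ‖}) :
    ∀ m ≤ M,
      normE (Ψ m)
        ≤ normE (Ψ 0)
          + 4 * ∑ k ∈ Finset.Icc 1 M, normEstar ((τ⁻¹ : ℂ) • (F k - F (k - 1))) * τ
          + 4 * normEstar (F 0) :=
  stmt_19_general A hA δhat hδ hcoerc hbar τ hτ M Ψ F scheme normE hnormE normEstar hnormEstar
end
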